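/- Assume the mesh functions (u_h)_{h>0} converge uniformly on compact subsets of Ω to a continuous convex function u : Ω → ℝ. Let K ⊂ Ω be compact and let h_k → 0 be any sequence. Then the set (⋂_{n} ⋃_{k ≥ n} ∂Γ(u_{h_k})(K)) \ ∂u(K) has d-dimensional Lebesgue measure zero, where ∂Γ(u_{h_k})(K) = ⋃_{x ∈ K ∩ conv(N_{h_k})} ∂Γ(u_{h_k})(x) and ∂u(K) = ⋃_{x∈K} ∂u(x). -/

import Mathlib

open Set MeasureTheory Filter Topology

noncomputable section

abbrev Euc (d : ℕ) := EuclideanSpace ℝ (Fin d)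

/-- Subdifferential of `v` at `x` relative to the set `C`. -/
def subdiff {d : ℕ} (C : Set (Euc d)) (v : Euc d → ℝ) (x : Euc d) : Set (Euc d) :=
  {p | ∀ y ∈ C, v x + (inner ℝ p (y - x) : ℝ) ≤ v y}

/-- `⋃ x ∈ S, subdiff C v x`. -/
def subdiffSet {d : ℕ} (C : Set (Euc d)) (v : Euc d → ℝ) (S : Set (Euc d)) : Set (Euc d) :=
  ⋃ x ∈ S, subdiff C v x

/-- The convex extension `ũ` of `u : Ω → ℝ` (may take the value `+∞`, hence `EReal`). -/
def extFun {d : ℕ} (Ω : Set (Euc d)) (u : Euc d → ℝ) (x : Euc d) : EReal :=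
  ⨆ y ∈ Ω, ⨆ q ∈ subdiff Ω u y, ((u y + (inner ℝ q (x - y) : ℝ) : ℝ) : EReal)

/-- `χ_u(x)`: the subdifferential of the extension `ũ` at `x`. -/
def chiSub {d : ℕ} (Ω : Set (Euc d)) (u : Euc d → ℝ) (x : Euc d) : Set (Euc d) :=
  {p | ∀ z : Euc d, extFun Ω u x + (((inner ℝ p (z - x) : ℝ) : ℝ) : EReal) ≤ extFun Ω u z}

def chiSubSet {d : ℕ} (Ω : Set (Euc d)) (u : Euc d → ℝ) (S : Set (Euc d)) : Set (Euc d) :=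
  ⋃ x ∈ S, chiSub Ω u x

/-- The lattice `hℤ^d`. -/
def latt (d : ℕ) (h : ℝ) : Set (Euc d) := {x | ∀ i, ∃ m : ℤ, x i = m * h}

/-- `Ω_h = Ω ∩ hℤ^d`. -/
def meshΩ {d : ℕ} (Ω : Set (Euc d)) (h : ℝ) : Set (Euc d) := Ω ∩ latt d h

/-- An integer direction `e ∈ ℤ^d` as a vector of `ℝ^d`. -/
def intVec {d : ℕ} (e : Fin d → ℤ) : Euc d :=
  (EuclideanSpace.equiv (Fin d) ℝ).symm (fun i => (e i : ℝ))

/-- `h^e_x = sup { r h : r ∈ [0,1], x + r h e ∈ closure Ω }`. -/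
def hev {d : ℕ} (Ω : Set (Euc d)) (h : ℝ) (x : Euc d) (e : Fin d → ℤ) : ℝ :=
  sSup {t | ∃ r ∈ Icc (0:ℝ) 1, t = r * h ∧ x + (r * h) • intVec e ∈ closure Ω}

/-- The boundary nodes `∂Ω_h` for the direction set `V`. -/
def meshBd {d : ℕ} (Ω : Set (Euc d)) (h : ℝ) (V : Set (Fin d → ℤ)) : Set (Euc d) :=
  {x ∈ frontier Ω | ∃ y ∈ meshΩ Ω h, ∃ e ∈ V, x = y + hev Ω h y e • intVec e}

/-- The convex envelope of `u` with constraints on `N`: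
`Γ(u)(x) = sup {L x : L affine, L ≤ u on N}`. -/
def convEnv {d : ℕ} (N : Set (Euc d)) (u : Euc d → ℝ) (x : Euc d) : ℝ :=
  sSup {t | ∃ (p : Euc d) (c : ℝ),
    (∀ y ∈ N, (inner ℝ p y : ℝ) + c ≤ u y) ∧ t = (inner ℝ p x : ℝ) + c}

/-- The second difference operator `Δ_e u_h (x)`. -/
def deltaE {d : ℕ} (Ω : Set (Euc d)) (h : ℝ) (u : Euc d → ℝ) (e : Fin d → ℤ)
    (x : Euc d) : ℝ :=
  2 / (hev Ω h x e + hev Ω h x (-e)) *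
    ((u (x + hev Ω h x e • intVec e) - u x) / hev Ω h x e +
     (u (x + hev Ω h x (-e) • intVec (-e)) - u x) / hev Ω h x (-e))

/-- Discrete convexity with the full set of directions `e ∈ ℤ^d \ {0}`. -/
def DiscConvex {d : ℕ} (Ω : Set (Euc d)) (h : ℝ) (u : Euc d → ℝ) : Prop :=
  ∀ x ∈ meshΩ Ω h, ∀ e : Fin d → ℤ, e ≠ 0 → 0 ≤ deltaE Ω h u e x

/-!
The Legendre transform `W_k q = max_{y ∈ N_k} (⟪q, y⟫ - u_{h_k} y)` of the nodal values is a
maximum of finitely many affine functions, hence Lipschitz, hence (Rademacher) differentiable off a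
null set; so all the `W_k` are differentiable off one null set. If `p ∈ ∂Γ(u_{h_k})(x)` and `W_k`
is differentiable at `p`, then `x` and every node maximizing `⟪p, ·⟫ - u_{h_k}` are subgradients of
`W_k` at `p`, hence equal: `x` is a node and `p` supports `u_{h_k}` at `x` on all of `N_k`. For `p`
in the limsup, such contact nodes `x ∈ K` accumulate at some `x₀ ∈ K`; approximating any `z ∈ Ω` by
lattice nodes, uniform convergence on compacta and continuity of `u` carry the supporting
inequalities to the limit, so `p ∈ ∂u(x₀)`.
-/

section Legendre

variable {E : Type*} [NormedAddCommGroup E] [InnerProductSpace ℝ E]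

def legendre (N : Set E) (g : E → ℝ) (q : E) : ℝ :=
  sSup ((fun y => inner ℝ q y - g y) '' N)

variable {N : Set E} {g : E → ℝ}

lemma le_legendre (hN : N.Finite) (q : E) {y : E} (hy : y ∈ N) :
    inner ℝ q y - g y ≤ legendre N g q :=
  le_csSup (hN.image _).bddAbove (mem_image_of_mem _ hy)

lemma legendre_le {q : E} {c : ℝ} (hne : N.Nonempty) (h : ∀ y ∈ N, inner ℝ q y - g y ≤ c) :
    legendre N g q ≤ c :=
  csSup_le (hne.image _) (forall_mem_image.2 h)

lemma exists_legendre_eq (hN : N.Finite) (hne : N.Nonempty) (q : E) :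
    ∃ y ∈ N, legendre N g q = inner ℝ q y - g y :=
  (hne.image _).csSup_mem (hN.image _) |>.imp fun _ ⟨hy, h⟩ => ⟨hy, h.symm⟩

lemma exists_lipschitzWith_legendre (hN : N.Finite) (g : E → ℝ) :
    ∃ C, LipschitzWith C (legendre N g) := by
  rcases N.eq_empty_or_nonempty with rfl | hne
  · exact ⟨0, by simp [legendre]⟩
  obtain ⟨R, hR⟩ := hN.isBounded.subset_closedBall 0
  refine ⟨R.toNNReal, LipschitzWith.of_le_add_mul _ fun a b => legendre_le hne fun y hy => ?_⟩
  have hyR : ‖y‖ ≤ R := by simpa using hR hy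
  calc inner ℝ a y - g y = inner ℝ (a - b) y + (inner ℝ b y - g y) := by
        rw [inner_sub_left]; ring
    _ ≤ ‖a - b‖ * R + legendre N g b := by
        gcongr
        · exact (real_inner_le_norm _ _).trans (by gcongr)
        · exact le_legendre hN b hy
    _ ≤ legendre N g b + R.toNNReal * dist a b := by
        rw [dist_eq_norm, Real.coe_toNNReal']
        nlinarith [le_max_left R 0, norm_nonneg (a - b)]

lemma legendre_add_inner_le_of_eq (hN : N.Finite) {p y : E} (hy : y ∈ N)
    (hmax : legendre N g p = inner ℝ p y - g y) (q : E) :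
    legendre N g p + inner ℝ y (q - p) ≤ legendre N g q := by
  have := le_legendre (g := g) hN q hy
  rw [hmax, inner_sub_right, real_inner_comm q y, real_inner_comm p y]
  linarith

end Legendre

lemma gradient_eq_of_forall_add_inner_le {E : Type*} [NormedAddCommGroup E]
    [InnerProductSpace ℝ E] [CompleteSpace E] {f : E → ℝ} {p v : E}
    (hf : DifferentiableAt ℝ f p) (hv : ∀ q, f p + inner ℝ v (q - p) ≤ f q) :
    gradient f p = v := by
  have hmin : IsLocalMin (fun q => f q - innerSL ℝ v q) p :=
    Filter.Eventually.of_forall fun q => by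
      have := hv q
      simp only [innerSL_apply_apply, inner_sub_right] at this ⊢
      linarith
  have hderiv := hmin.fderiv_eq_zero
  rw [fderiv_fun_sub hf (innerSL ℝ v).differentiableAt, (innerSL ℝ v).fderiv, sub_eq_zero] at hderiv
  rw [gradient, hderiv]
  exact (InnerProductSpace.toDual ℝ E).symm_apply_apply v

section ConvexEnvelope

variable {d : ℕ} {N : Set (Euc d)} {g : Euc d → ℝ} {x p : Euc d}

lemma convEnv_le (hN : N.Finite) {y : Euc d} (hy : y ∈ N) : convEnv N g y ≤ g y := by
  refine csSup_le ⟨_, 0, sInf (g '' N), fun z hz => ?_, rfl⟩ ?_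
  · simpa using csInf_le (hN.image g).bddBelow (mem_image_of_mem g hz)
  · rintro t ⟨q, c, hqc, rfl⟩
    exact hqc y hy

lemma inner_sub_legendre_le_convEnv (hN : N.Finite) (hx : x ∈ convexHull ℝ N) (q : Euc d) :
    inner ℝ q x - legendre N g q ≤ convEnv N g x := by
  refine le_csSup ⟨sSup (g '' N), ?_⟩ ⟨q, -legendre N g q, fun y hy => ?_, by ring⟩
  · rintro t ⟨q', c, hq'c, rfl⟩
    have haff : ConvexOn ℝ univ fun z => inner ℝ q' z + c :=
      ((innerₛₗ ℝ q').convexOn convex_univ).add_const c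
    obtain ⟨y, hy, hxy⟩ := haff.exists_ge_of_mem_convexHull (subset_univ N) hx
    exact hxy.trans ((hq'c y hy).trans (le_csSup (hN.image g).bddAbove (mem_image_of_mem g hy)))
  · linarith [le_legendre (g := g) hN q hy]

lemma legendre_eq_inner_sub_convEnv (hN : N.Finite) (hx : x ∈ convexHull ℝ N)
    (hp : p ∈ subdiff (convexHull ℝ N) (convEnv N g) x) :
    legendre N g p = inner ℝ p x - convEnv N g x := by
  refine le_antisymm (legendre_le (convexHull_nonempty_iff.1 ⟨x, hx⟩) fun y hy => ?_)
    (by linarith [inner_sub_legendre_le_convEnv (g := g) hN hx p])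
  have hsub := hp y (subset_convexHull ℝ N hy)
  rw [inner_sub_right] at hsub
  linarith [convEnv_le (g := g) hN hy]

lemma legendre_add_inner_le_of_mem_subdiff_convEnv (hN : N.Finite) (hx : x ∈ convexHull ℝ N)
    (hp : p ∈ subdiff (convexHull ℝ N) (convEnv N g) x) (q : Euc d) :
    legendre N g p + inner ℝ x (q - p) ≤ legendre N g q := by
  rw [legendre_eq_inner_sub_convEnv hN hx hp, inner_sub_right, real_inner_comm q x,
    real_inner_comm p x]
  linarith [inner_sub_legendre_le_convEnv (g := g) hN hx q]

lemma mem_subdiff_of_mem_subdiff_convEnv (hN : N.Finite) (hx : x ∈ convexHull ℝ N)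
    (hp : p ∈ subdiff (convexHull ℝ N) (convEnv N g) x)
    (hdiff : DifferentiableAt ℝ (legendre N g) p) :
    x ∈ N ∧ p ∈ subdiff N g x := by
  obtain ⟨y, hy, hmax⟩ := exists_legendre_eq hN (convexHull_nonempty_iff.1 ⟨x, hx⟩) p
  obtain rfl : x = y :=
    (gradient_eq_of_forall_add_inner_le hdiff
      (legendre_add_inner_le_of_mem_subdiff_convEnv hN hx hp)).symm.trans
    (gradient_eq_of_forall_add_inner_le hdiff (legendre_add_inner_le_of_eq hN hy hmax))
  refine ⟨hy, fun z hz => ?_⟩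
  rw [inner_sub_right]
  linarith [le_legendre (g := g) hN p hz]

lemma volume_setOf_not_differentiableAt_legendre (hN : N.Finite) (g : Euc d → ℝ) :
    volume {q | ¬ DifferentiableAt ℝ (legendre N g) q} = 0 := by
  obtain ⟨C, hC⟩ := exists_lipschitzWith_legendre hN g
  exact ae_iff.1 hC.ae_differentiableAt

end ConvexEnvelope

section NodeConvergence

variable {ι κ E : Type*} [TopologicalSpace E] {l : Filter ι} {Ω : Set E} {N : ι → Set E}

def TendstoOnCompactNodes (l : Filter ι) (Ω : Set E) (N : ι → Set E) (v : ι → E → ℝ)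
    (u : E → ℝ) : Prop :=
  ∀ K, IsCompact K → K ⊆ Ω → ∀ ε > 0, ∀ᶠ i in l, ∀ x ∈ N i ∩ K, |v i x - u x| < ε

def NodesDenseIn (l : Filter ι) (Ω : Set E) (N : ι → Set E) : Prop :=
  ∀ z ∈ Ω, ∃ y : ι → E, Tendsto y l (𝓝 z) ∧ ∀ᶠ i in l, y i ∈ N i

lemma TendstoOnCompactNodes.comp {v : ι → E → ℝ} {u : E → ℝ}
    (h : TendstoOnCompactNodes l Ω N v u) {l' : Filter κ} {φ : κ → ι} (hφ : Tendsto φ l' l) :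
    TendstoOnCompactNodes l' Ω (N ∘ φ) (v ∘ φ) u :=
  fun K hK hKΩ ε hε => hφ.eventually (h K hK hKΩ ε hε)

lemma NodesDenseIn.comp (h : NodesDenseIn l Ω N) {l' : Filter κ} {φ : κ → ι}
    (hφ : Tendsto φ l' l) : NodesDenseIn l' Ω (N ∘ φ) :=
  fun z hz =>
    let ⟨y, hy, hyN⟩ := h z hz
    ⟨y ∘ φ, hy.comp hφ, hφ.eventually hyN⟩

lemma NodesDenseIn.mono (h : NodesDenseIn l Ω N) {N' : ι → Set E} (hN : ∀ i, N i ⊆ N' i) :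
    NodesDenseIn l Ω N' :=
  fun z hz => (h z hz).imp fun _ ⟨hy, hyN⟩ => ⟨hy, hyN.mono fun i hi => hN i hi⟩

lemma TendstoOnCompactNodes.tendsto_apply [LocallyCompactSpace E] {v : ι → E → ℝ} {u : E → ℝ}
    (h : TendstoOnCompactNodes l Ω N v u) (hop : IsOpen Ω) (hu : ContinuousOn u Ω)
    {w : ι → E} {w₀ : E} (hw : Tendsto w l (𝓝 w₀)) (hw₀ : w₀ ∈ Ω) (hwN : ∀ᶠ i in l, w i ∈ N i) :
    Tendsto (fun i => v i (w i)) l (𝓝 (u w₀)) := by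
  obtain ⟨K, hKnhds, hKΩ, hK⟩ := local_compact_nhds (hop.mem_nhds hw₀)
  have hwK : ∀ᶠ i in l, w i ∈ K := hw hKnhds
  have hdiff : Tendsto (fun i => v i (w i) - u (w i)) l (𝓝 0) :=
    Metric.tendsto_nhds.2 fun ε hε => (h K hK hKΩ ε hε).and (hwN.and hwK) |>.mono
      fun i ⟨hi, hwi⟩ => by simpa [Real.dist_eq] using hi (w i) hwi
  simpa using hdiff.add ((hu.continuousAt (hop.mem_nhds hw₀)).tendsto.comp hw)

end NodeConvergence

section Stability

variable {ι : Type*} {l : Filter ι} {d : ℕ} {Ω : Set (Euc d)} {N : ι → Set (Euc d)}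
  {v : ι → Euc d → ℝ} {u : Euc d → ℝ}

lemma mem_subdiff_of_tendsto [l.NeBot] (hconv : TendstoOnCompactNodes l Ω N v u)
    (hdense : NodesDenseIn l Ω N) (hop : IsOpen Ω) (hu : ContinuousOn u Ω) {x : ι → Euc d}
    {x₀ p : Euc d} (hx : Tendsto x l (𝓝 x₀)) (hx₀ : x₀ ∈ Ω) (hxN : ∀ᶠ i in l, x i ∈ N i)
    (hp : ∀ᶠ i in l, p ∈ subdiff (N i) (v i) (x i)) :
    p ∈ subdiff Ω u x₀ := by
  intro z hz
  obtain ⟨y, hy, hyN⟩ := hdense z hz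
  refine le_of_tendsto_of_tendsto
    ((hconv.tendsto_apply hop hu hx hx₀ hxN).add (tendsto_const_nhds.inner (hy.sub hx)))
    (hconv.tendsto_apply hop hu hy hz hyN) ?_
  filter_upwards [hp, hyN] with i hpi hyi using hpi (y i) hyi

lemma exists_mem_subdiff_of_frequently {K : Set (Euc d)} {N : ℕ → Set (Euc d)}
    {v : ℕ → Euc d → ℝ} (hconv : TendstoOnCompactNodes atTop Ω N v u)
    (hdense : NodesDenseIn atTop Ω N) (hop : IsOpen Ω) (hu : ContinuousOn u Ω)
    (hK : IsCompact K) (hKΩ : K ⊆ Ω) {p : Euc d}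
    (hp : ∃ᶠ k in atTop, ∃ x ∈ K ∩ N k, p ∈ subdiff (N k) (v k) x) :
    ∃ x₀ ∈ K, p ∈ subdiff Ω u x₀ := by
  obtain ⟨φ, hφ, hpφ⟩ := extraction_of_frequently_atTop hp
  choose x hx hpx using hpφ
  obtain ⟨x₀, hx₀, ψ, hψ, hxψ⟩ := hK.tendsto_subseq fun n => (hx n).1
  have hφψ : Tendsto (φ ∘ ψ) atTop atTop := (hφ.comp hψ).tendsto_atTop
  exact ⟨x₀, hx₀, mem_subdiff_of_tendsto (hconv.comp hφψ) (hdense.comp hφψ) hop hu hxψ (hKΩ hx₀)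
    (Eventually.of_forall fun n => (hx (ψ n)).2) (Eventually.of_forall fun n => hpx (ψ n))⟩

end Stability

section Lattice

variable {d : ℕ} {h : ℝ}

lemma meshΩ_finite {Ω : Set (Euc d)} (hbd : Bornology.IsBounded Ω) (hh : 0 < h) :
    (meshΩ Ω h).Finite := by
  obtain ⟨R, hR⟩ := hbd.subset_closedBall 0
  set C : ℤ := ⌈R / h⌉
  refine ((Set.finite_Icc (fun _ : Fin d => -C) fun _ => C).image
    fun m => h • intVec m).subset ?_
  rintro x ⟨hxΩ, hx⟩
  choose m hm using hx
  have hmC : ∀ i, |m i| ≤ C := fun i => by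
    have hxi : |(m i : ℝ)| * h ≤ R := by
      rw [← abs_of_pos hh, ← abs_mul, ← hm i]
      exact (PiLp.norm_apply_le x i).trans (by simpa using hR hxΩ)
    rw [← Int.cast_le (R := ℝ), Int.cast_abs]
    exact ((le_div_iff₀ hh).2 hxi).trans (Int.le_ceil _)
  refine ⟨m, ⟨fun i => (abs_le.1 (hmC i)).1, fun i => (abs_le.1 (hmC i)).2⟩, ?_⟩
  ext i
  simp [intVec, hm i, mul_comm]

lemma exists_mem_latt_norm_sub_le (hh : 0 < h) (z : Euc d) :
    ∃ y ∈ latt d h, ‖y - z‖ ≤ √d * h := by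
  set m : Fin d → ℤ := fun i => round (z i / h)
  refine ⟨h • intVec m, fun i => ⟨m i, by simp [intVec, mul_comm]⟩, ?_⟩
  have hcoord : ∀ i, ‖(h • intVec m - z) i‖ ≤ h := fun i => by
    have hround := abs_sub_round (z i / h)
    have hi : (h • intVec m - z) i = -((z i / h - m i) * h) := by
      simp [intVec, m]; field_simp; ring
    rw [hi, norm_neg, Real.norm_eq_abs, abs_mul, abs_of_pos hh]
    nlinarith
  calc ‖h • intVec m - z‖ = √(∑ i, ‖(h • intVec m - z) i‖ ^ 2) := EuclideanSpace.norm_eq _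
    _ ≤ √(∑ _i : Fin d, h ^ 2) := by gcongr with i; exact hcoord i
    _ = √d * h := by simp [Real.sqrt_mul, Real.sqrt_sq hh.le]

lemma nodesDenseIn_meshΩ {ι : Type*} {l : Filter ι} {Ω : Set (Euc d)} (hop : IsOpen Ω)
    {s : ι → ℝ} (hs : Tendsto s l (𝓝 0)) (hspos : ∀ i, 0 < s i) :
    NodesDenseIn l Ω fun i => meshΩ Ω (s i) := by
  intro z hz
  choose y hy hdist using fun i => exists_mem_latt_norm_sub_le (hspos i) z
  have hyz : Tendsto y l (𝓝 z) := tendsto_iff_norm_sub_tendsto_zero.2 <|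
    squeeze_zero (fun _ => norm_nonneg _) hdist (by simpa using hs.const_mul √d)
  exact ⟨y, hyz, (hyz.eventually_mem (hop.mem_nhds hz)).mono fun i hi => ⟨hi, hy i⟩⟩

end Lattice

theorem statement11_general {d : ℕ} (Ω : Set (Euc d))
    (hbd : Bornology.IsBounded Ω) (hop : IsOpen Ω)
    (B : ℝ → Set (Euc d)) (hB : ∀ h : ℝ, 0 < h → (B h).Finite ∧ B h ⊆ frontier Ω)
    (u : Euc d → ℝ) (huc : ContinuousOn u Ω)
    (uh : ℝ → Euc d → ℝ)
    (hcvg : ∀ K : Set (Euc d), IsCompact K → K ⊆ Ω → ∀ ε : ℝ, 0 < ε →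
      ∃ h₀ : ℝ, 0 < h₀ ∧ ∀ h : ℝ, 0 < h → h < h₀ →
        ∀ x ∈ (meshΩ Ω h ∪ B h) ∩ K, |uh h x - u x| < ε)
    (K : Set (Euc d)) (hK : IsCompact K) (hKΩ : K ⊆ Ω)
    (hk : ℕ → ℝ) (hkpos : ∀ k, 0 < hk k) (hk0 : Tendsto hk atTop (𝓝 0)) :
    volume ((⋂ n : ℕ, ⋃ k ∈ Ici n, ⋃ x ∈ K ∩ convexHull ℝ (meshΩ Ω (hk k) ∪ B (hk k)),
        subdiff (convexHull ℝ (meshΩ Ω (hk k) ∪ B (hk k)))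
          (convEnv (meshΩ Ω (hk k) ∪ B (hk k)) (uh (hk k))) x) \
      (⋃ x ∈ K, subdiff Ω u x)) = 0 := by
  set N : ℕ → Set (Euc d) := fun k => meshΩ Ω (hk k) ∪ B (hk k)
  have hN : ∀ k, (N k).Finite := fun k => (meshΩ_finite hbd (hkpos k)).union (hB _ (hkpos k)).1
  have hconv : TendstoOnCompactNodes atTop Ω N (fun k => uh (hk k)) u :=
    fun K' hK' hK'Ω ε hε => by
      obtain ⟨h₀, hh₀, hctrl⟩ := hcvg K' hK' hK'Ω ε hε
      filter_upwards [hk0.eventually (gt_mem_nhds hh₀)] with k hkh₀ using hctrl _ (hkpos k) hkh₀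
  have hdense : NodesDenseIn atTop Ω N :=
    (nodesDenseIn_meshΩ hop hk0 hkpos).mono fun _ => subset_union_left
  refine measure_mono_null (fun p ⟨hp, hpK⟩ => ?_) (measure_iUnion_null fun k =>
    volume_setOf_not_differentiableAt_legendre (hN k) (uh (hk k)))
  by_contra hdiff
  simp only [mem_iUnion, mem_ofPred_eq, not_exists, not_not] at hdiff
  obtain ⟨x₀, hx₀, hpx₀⟩ := exists_mem_subdiff_of_frequently hconv hdense hop huc hK hKΩ <|
    frequently_atTop.2 fun n => by
      obtain ⟨k, hkn, x, ⟨hxK, hx⟩, hpx⟩ : ∃ k ≥ n, ∃ x ∈ K ∩ convexHull ℝ (N k),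
          p ∈ subdiff (convexHull ℝ (N k)) (convEnv (N k) (uh (hk k))) x := by
        simpa only [mem_iUnion, mem_Ici, exists_prop] using mem_iInter.1 hp n
      obtain ⟨hxN, hpN⟩ := mem_subdiff_of_mem_subdiff_convEnv (hN k) hx hpx (hdiff k)
      exact ⟨k, hkn, x, ⟨hxK, hxN⟩, hpN⟩
  exact hpK (mem_biUnion hx₀ hpx₀)

/-- if `u_h → u` uniformly on compact subsets of `Ω` with `u` continuous and
convex, then for each compact `K ⊆ Ω` and each sequence `h_k → 0`, the set
`(⋂ n, ⋃ k ≥ n, ∂Γ(u_{h_k})(K)) \ ∂u(K)` is Lebesgue-null. -/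
theorem statement11 {d : ℕ} (hd : 1 ≤ d) (Ω : Set (Euc d))
    (hne : Ω.Nonempty) (hbd : Bornology.IsBounded Ω) (hop : IsOpen Ω) (hcv : Convex ℝ Ω)
    (B : ℝ → Set (Euc d)) (hB : ∀ h : ℝ, 0 < h → (B h).Finite ∧ B h ⊆ frontier Ω)
    (u : Euc d → ℝ) (huc : ContinuousOn u Ω) (hucv : ConvexOn ℝ Ω u)
    (uh : ℝ → Euc d → ℝ)
    (hcvg : ∀ K : Set (Euc d), IsCompact K → K ⊆ Ω → ∀ ε : ℝ, 0 < ε →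
      ∃ h₀ : ℝ, 0 < h₀ ∧ ∀ h : ℝ, 0 < h → h < h₀ →
        ∀ x ∈ (meshΩ Ω h ∪ B h) ∩ K, |uh h x - u x| < ε)
    (K : Set (Euc d)) (hK : IsCompact K) (hKΩ : K ⊆ Ω)
    (hk : ℕ → ℝ) (hkpos : ∀ k, 0 < hk k) (hk0 : Tendsto hk atTop (𝓝 0)) :
    volume ((⋂ n : ℕ, ⋃ k ∈ Ici n, ⋃ x ∈ K ∩ convexHull ℝ (meshΩ Ω (hk k) ∪ B (hk k)),
        subdiff (convexHull ℝ (meshΩ Ω (hk k) ∪ B (hk k)))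
          (convEnv (meshΩ Ω (hk k) ∪ B (hk k)) (uh (hk k))) x) \
      (⋃ x ∈ K, subdiff Ω u x)) = 0 :=
  statement11_general Ω hbd hop B hB u huc uh hcvg K hK hKΩ hk hkpos hk0
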